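/- For 0 < r < 1, the homogeneously weighted space (ℝ², ‖·‖_{Polygon,r}) whose unit sphere is the hexagon through (0,r), (1,1), (1,−1), (0,−r), (−1,−1), (−1,1) does not satisfy the Cauchy–Schwarz–Bunjakowsky inequality for the product ⟨·|·⟩♠: there exist nonzero vectors x, y with |⟨x|y⟩♠| > ‖x‖·‖y‖. -/
import Mathlib


theorem stmt_18 (r : ℝ) (hr0 : 0 < r) (hr1 : r < 1)
    (N : ℝ × ℝ → ℝ) (hnn : ∀ v, 0 ≤ N v)
    (hom : ∀ (c : ℝ) (v : ℝ × ℝ), N (c • v) = |c| * N v)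
    (hsphere : ∀ v ∈ segment ℝ ((0 : ℝ), r) (1, 1) ∪ segment ℝ ((1 : ℝ), 1) (1, -1) ∪
        segment ℝ ((1 : ℝ), -1) (0, -r) ∪ segment ℝ ((0 : ℝ), -r) (-1, -1) ∪
        segment ℝ ((-1 : ℝ), -1) (-1, 1) ∪ segment ℝ ((-1 : ℝ), 1) (0, r), N v = 1)
    (sp : ℝ × ℝ → ℝ × ℝ → ℝ)
    (hsp : ∀ x y, N x * N y ≠ 0 → sp x y =
      (1/4) * N x * N y *
        ((N ((N x)⁻¹ • x + (N y)⁻¹ • y)) ^ 2 - (N ((N x)⁻¹ • x - (N y)⁻¹ • y)) ^ 2)) :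
    ∃ x y : ℝ × ℝ, N x * N y ≠ 0 ∧ N x * N y < |sp x y| := by
  set a : ℝ := 1 - r with ha
  set b : ℝ := r + a ^ 2 with hb
  have ha0 : 0 < a := by simp [ha]; linarith
  have ha1 : a < 1 := by simp [ha]; linarith
  have hbpos : 0 < b := by positivity
  refine ⟨(a, b), (-a, b), ?_⟩
  -- u on segment (0,r)-(1,1)
  have hu : ((a, b) : ℝ × ℝ) ∈ segment ℝ ((0 : ℝ), r) (1, 1) := by
    refine ⟨1 - a, a, by linarith, le_of_lt ha0, by ring, ?_⟩
    simp [Prod.ext_iff, Prod.smul_mk, hb, ha]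
    ring
  -- v on segment (-1,1)-(0,r)
  have hv : ((-a, b) : ℝ × ℝ) ∈ segment ℝ ((-1 : ℝ), 1) (0, r) := by
    refine ⟨a, 1 - a, le_of_lt ha0, by linarith, by ring, ?_⟩
    simp [Prod.ext_iff, Prod.smul_mk, hb, ha]
    ring
  have hNu : N (a, b) = 1 := hsphere _ (by
    left; left; left; left; left; exact hu)
  have hNv : N (-a, b) = 1 := hsphere _ (by right; exact hv)
  have hN0r : N (0, r) = 1 := hsphere _ (by
    left; left; left; left; left
    exact ⟨1, 0, zero_le_one, le_refl 0, by ring, by simp⟩)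
  have hN10 : N (1, 0) = 1 := hsphere _ (by
    left; left; left; left; right
    refine ⟨1/2, 1/2, by norm_num, by norm_num, by norm_num, ?_⟩
    simp [Prod.ext_iff, Prod.smul_mk]
    norm_num)
  have hprod : N (a, b) * N (-a, b) ≠ 0 := by rw [hNu, hNv]; norm_num
  have hsum : ((1 : ℝ) : ℝ)⁻¹ • ((a, b) : ℝ × ℝ) + (1 : ℝ)⁻¹ • ((-a, b) : ℝ × ℝ)
      = (2 * b / r) • ((0 : ℝ), r) := by
    simp [Prod.ext_iff, Prod.smul_mk]
    field_simp
    ring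
  have hdiff : ((1 : ℝ) : ℝ)⁻¹ • ((a, b) : ℝ × ℝ) - (1 : ℝ)⁻¹ • ((-a, b) : ℝ × ℝ)
      = (2 * a) • ((1 : ℝ), 0) := by
    simp [Prod.ext_iff, Prod.smul_mk]
    ring
  have hspval := hsp (a, b) (-a, b) hprod
  rw [hNu, hNv] at hspval
  rw [hsum, hdiff, hom, hom, hN0r, hN10] at hspval
  have h2br : |2 * b / r| = 2 * b / r := abs_of_pos (by positivity)
  have h2a : |2 * a| = 2 * a := abs_of_pos (by positivity)
  rw [h2br, h2a] at hspval
  refine ⟨hprod, ?_⟩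
  rw [hNu, hNv, hspval]
  have hkey : (1 : ℝ) < (1/4) * 1 * 1 * ((2 * b / r * 1) ^ 2 - (2 * a * 1) ^ 2) := by
    have hr2 : (0:ℝ) < r ^ 2 := by positivity
    have heq : (1:ℝ)/4 * 1 * 1 * ((2 * b / r * 1) ^ 2 - (2 * a * 1) ^ 2)
        = (b ^ 2 - r ^ 2 * a ^ 2) / r ^ 2 := by
      field_simp
      ring
    rw [heq, lt_div_iff₀ hr2, hb, ha]
    nlinarith [sq_nonneg (1 - r), sq_nonneg ((1-r)^2)]
  calc (1:ℝ) * 1 = 1 := by ring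
    _ < _ := lt_of_lt_of_le hkey (le_abs_self _)
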